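/- Let ν > 2 and set κ = Γ((ν+1)/2)(ν − 1) / (2√π Γ(ν/2)). Then for every real t (of either sign), both 1 / (1 − F_ν(t)) ≤ 2 + (t² + ν)^{ν/2} / κ and 1 / F_ν(t) ≤ 2 + (t² + ν)^{ν/2} / κ. -/

import Mathlib

/-!
With `s = (ν + 1) / 2`, the density of `F_ν` is a rescaling of `(1 + x²)^(-s)`. The substitution
`t = 1 / (1 + x²)` turns `∫₀^∞ (1 + x²)^(-s)` into half the Beta integral `B(s - 1/2, 1/2)`,
so the density has total mass `1` and `F_ν(0) = 1/2`; hence `1 / (1 - F_ν(t)) ≤ 2` for `t ≤ 0`.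
For `t ≥ 0`, the pointwise bound `x (1 + x²)^(-s-1/2) ≤ (1 + x²)^(-s)`, whose left side has an
explicit primitive, gives `1 - F_ν(t) ≥ κ (t² + ν)^(-ν/2)` because `(ν - 1)/2 ≤ ν^(ν/2 - 1)`.
The bound on `1 / F_ν(t)` follows from the symmetry `F_ν(t) = 1 - F_ν(-t)`.
-/

open MeasureTheory

/-- The CDF of the Student's t distribution with `ν` degrees of freedom. -/
noncomputable def tCDF (ν t : ℝ) : ℝ :=
  ∫ u in Set.Iic t,
    (Real.Gamma ((ν + 1) / 2) / (Real.sqrt (ν * Real.pi) * Real.Gamma (ν / 2))) *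
      (1 + u ^ 2 / ν) ^ (-((ν + 1) / 2))

open Set Real Filter Topology

theorem integral_Ioo_rpow_mul_one_sub_rpow {a b : ℝ} (ha : 0 < a) (hb : 0 < b) :
    ∫ t in Ioo (0 : ℝ) 1, t ^ (a - 1) * (1 - t) ^ (b - 1) =
      Gamma a * Gamma b / Gamma (a + b) := by
  rw [← ProbabilityTheory.beta, ProbabilityTheory.beta_eq_betaIntegralReal a b ha hb,
    Complex.betaIntegral, intervalIntegral.integral_of_le zero_le_one,
    integral_Ioc_eq_integral_Ioo, ← RCLike.re_to_complex, ← integral_re]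
  · refine setIntegral_congr_fun measurableSet_Ioo fun t ⟨ht0, ht1⟩ ↦ ?_
    have hcast : (t : ℂ) ^ ((a : ℂ) - 1) * (1 - (t : ℂ)) ^ ((b : ℂ) - 1)
        = ((t ^ (a - 1) * (1 - t) ^ (b - 1) : ℝ) : ℂ) := by
      push_cast [Complex.ofReal_cpow ht0.le, Complex.ofReal_cpow (sub_nonneg.2 ht1.le)]
      rfl
    simp only [hcast, RCLike.re_to_complex, Complex.ofReal_re]
  · exact (intervalIntegrable_iff_integrableOn_Ioo_of_le zero_le_one).1
      (Complex.betaIntegral_convergent (by simpa) (by simpa))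

theorem image_inv_one_add_sq_Ioi : (fun u : ℝ ↦ (1 + u ^ 2)⁻¹) '' Ioi 0 = Ioo 0 1 := by
  ext t
  constructor
  · rintro ⟨u, hu, rfl⟩
    exact ⟨by positivity, inv_lt_one_of_one_lt₀ (lt_add_of_pos_right 1 (pow_pos hu 2))⟩
  · rintro ⟨ht0, ht1⟩
    have hpos : 0 < (1 - t) / t := div_pos (by linarith) ht0
    refine ⟨√((1 - t) / t), sqrt_pos.2 hpos, ?_⟩
    simp only [sq_sqrt hpos.le]
    field_simp
    ring

theorem injOn_inv_one_add_sq_Ioi : InjOn (fun u : ℝ ↦ (1 + u ^ 2)⁻¹) (Ioi 0) := by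
  intro u hu v hv huv
  exact (pow_left_inj₀ hu.out.le hv.out.le two_ne_zero).1 (by simpa using huv)

theorem beta_integrand_comp_inv_one_add_sq {s u : ℝ} (hu : 0 < u) :
    |-(2 * u) / (1 + u ^ 2) ^ 2| *
        ((1 + u ^ 2)⁻¹ ^ (s - 1 / 2 - 1) * (1 - (1 + u ^ 2)⁻¹) ^ (1 / 2 - 1 : ℝ))
      = 2 * (1 + u ^ 2) ^ (-s) := by
  set w := 1 + u ^ 2
  have hw0 : 0 < w := by positivity
  have h1 : 1 - w⁻¹ = u ^ 2 * w⁻¹ := by field_simp; ring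
  have hu2 : (u ^ 2) ^ (1 / 2 - 1 : ℝ) = u⁻¹ := by
    rw [← rpow_natCast_mul hu.le]; norm_num [rpow_neg_one]
  rw [h1, mul_rpow (by positivity) (by positivity), hu2, abs_div, abs_neg,
    abs_of_pos (by positivity), abs_of_pos (by positivity), inv_rpow hw0.le,
    inv_rpow hw0.le, ← rpow_natCast, ← rpow_neg hw0.le, ← rpow_neg hw0.le]
  field_simp
  rw [← rpow_add hw0, ← rpow_add hw0]
  congr 1
  push_cast
  ring

theorem integral_Ioi_zero_one_add_sq_rpow_neg {s : ℝ} (hs : 1 / 2 < s) :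
    ∫ u in Ioi (0 : ℝ), (1 + u ^ 2) ^ (-s) = √π * Gamma (s - 1 / 2) / (2 * Gamma s) := by
  have hderiv : ∀ u ∈ Ioi (0 : ℝ), HasDerivWithinAt (fun u : ℝ ↦ (1 + u ^ 2)⁻¹)
      (-(2 * u) / (1 + u ^ 2) ^ 2) (Ioi 0) u := fun u _ ↦ by
    have := ((hasDerivAt_pow 2 u).const_add 1).fun_inv (by positivity)
    simpa using this.hasDerivWithinAt
  have hbeta := integral_Ioo_rpow_mul_one_sub_rpow (sub_pos.2 hs) one_half_pos
  rw [← image_inv_one_add_sq_Ioi, integral_image_eq_integral_abs_deriv_smul measurableSet_Ioi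
    hderiv injOn_inv_one_add_sq_Ioi, setIntegral_congr_fun measurableSet_Ioi
    fun u hu ↦ by rw [smul_eq_mul, beta_integrand_comp_inv_one_add_sq hu], integral_const_mul,
    Gamma_one_half_eq, sub_add_cancel] at hbeta
  have hΓ : 0 < Gamma s := Gamma_pos_of_pos (by linarith)
  field_simp at hbeta ⊢
  linear_combination hbeta

theorem integrable_one_add_sq_rpow_neg {s : ℝ} (hs : 1 / 2 < s) :
    Integrable fun x : ℝ ↦ (1 + x ^ 2) ^ (-s) := by
  have := integrable_rpow_neg_one_add_norm_sq (E := ℝ) (μ := volume) (r := 2 * s)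
    (by simp only [Module.finrank_self, Nat.cast_one]; linarith)
  simpa [neg_div] using this

theorem mul_one_add_sq_rpow_le (s x : ℝ) :
    x * (1 + x ^ 2) ^ (-(s + 1 / 2)) ≤ (1 + x ^ 2) ^ (-s) := by
  have hw : 0 < 1 + x ^ 2 := by positivity
  have hx_le : x ≤ (1 + x ^ 2) ^ (1 / 2 : ℝ) := by
    rw [← sqrt_eq_rpow]
    exact le_sqrt_of_sq_le (by linarith)
  calc x * (1 + x ^ 2) ^ (-(s + 1 / 2))
      = x * ((1 + x ^ 2) ^ (1 / 2 : ℝ))⁻¹ * (1 + x ^ 2) ^ (-s) := by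
        rw [mul_assoc, ← rpow_neg hw.le, ← rpow_add hw]; ring_nf
    _ ≤ 1 * (1 + x ^ 2) ^ (-s) := by
        gcongr
        exact mul_inv_le_one_of_le₀ hx_le (by positivity)
    _ = (1 + x ^ 2) ^ (-s) := one_mul _

theorem one_add_sq_rpow_div_le_integral_Ioi {s t : ℝ} (hs : 1 / 2 < s) (ht : 0 ≤ t) :
    (1 + t ^ 2) ^ (-(s - 1 / 2)) / (2 * s - 1) ≤ ∫ x in Ioi t, (1 + x ^ 2) ^ (-s) := by
  have hs' : 1 - 2 * s ≠ 0 := by linarith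
  set F : ℝ → ℝ := fun x ↦ (1 + x ^ 2) ^ (-(s - 1 / 2)) / (1 - 2 * s)
  have hderiv : ∀ x ∈ Ici t, HasDerivAt F (x * (1 + x ^ 2) ^ (-(s + 1 / 2))) x := fun x _ ↦ by
    have h := (((hasDerivAt_pow 2 x).const_add 1).rpow_const (p := -(s - 1 / 2))
      (Or.inl (by positivity))).div_const (1 - 2 * s)
    refine h.congr_deriv ?_
    rw [show -(s - 1 / 2) - 1 = -(s + 1 / 2) by ring, div_eq_iff hs']
    push_cast
    ring
  have hnonneg : ∀ x ∈ Ioi t, 0 ≤ x * (1 + x ^ 2) ^ (-(s + 1 / 2)) := fun x hx ↦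
    mul_nonneg (ht.trans hx.out.le) (by positivity)
  have hlim : Tendsto F atTop (𝓝 0) := by
    have h := (tendsto_rpow_neg_atTop (by linarith : 0 < s - 1 / 2)).comp
      (tendsto_atTop_add_const_left atTop 1 (tendsto_pow_atTop two_ne_zero))
    simpa [F, Function.comp_def] using h.div_const (1 - 2 * s)
  have hint := integrableOn_Ioi_deriv_of_nonneg' hderiv hnonneg hlim
  have hval := integral_Ioi_of_hasDerivAt_of_nonneg' hderiv hnonneg hlim
  calc (1 + t ^ 2) ^ (-(s - 1 / 2)) / (2 * s - 1) = 0 - F t := by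
        rw [zero_sub, ← div_neg, neg_sub 1 (2 * s)]
    _ = ∫ x in Ioi t, x * (1 + x ^ 2) ^ (-(s + 1 / 2)) := hval.symm
    _ ≤ ∫ x in Ioi t, (1 + x ^ 2) ^ (-s) :=
        setIntegral_mono_on hint (integrable_one_add_sq_rpow_neg hs).integrableOn
          measurableSet_Ioi fun x hx ↦ mul_one_add_sq_rpow_le s x

noncomputable def tPDF (ν u : ℝ) : ℝ :=
  Gamma ((ν + 1) / 2) / (√(ν * π) * Gamma (ν / 2)) * (1 + u ^ 2 / ν) ^ (-((ν + 1) / 2))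

theorem tCDF_eq_integral_tPDF (ν t : ℝ) : tCDF ν t = ∫ u in Iic t, tPDF ν u := rfl

theorem tPDF_neg (ν u : ℝ) : tPDF ν (-u) = tPDF ν u := by
  simp only [tPDF, neg_sq]

theorem tPDF_nonneg {ν : ℝ} (hν : 0 < ν) (u : ℝ) : 0 ≤ tPDF ν u := by
  have := Gamma_pos_of_pos (by linarith : 0 < (ν + 1) / 2)
  have := Gamma_pos_of_pos (by linarith : 0 < ν / 2)
  unfold tPDF
  positivity

theorem tPDF_eq_comp_inv_sqrt_mul {ν : ℝ} (hν : 0 < ν) (u : ℝ) :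
    tPDF ν u = Gamma ((ν + 1) / 2) / (√(ν * π) * Gamma (ν / 2)) *
      (1 + ((√ν)⁻¹ * u) ^ 2) ^ (-((ν + 1) / 2)) := by
  rw [tPDF, mul_pow, inv_pow, sq_sqrt hν.le, inv_mul_eq_div]

theorem integrable_tPDF {ν : ℝ} (hν : 0 < ν) : Integrable (tPDF ν) := by
  simp_rw [funext (tPDF_eq_comp_inv_sqrt_mul hν)]
  exact ((integrable_one_add_sq_rpow_neg (by linarith)).comp_mul_left'
    (by positivity)).const_mul _

theorem integral_Ioi_tPDF {ν : ℝ} (hν : 0 < ν) (t : ℝ) :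
    ∫ u in Ioi t, tPDF ν u = Gamma ((ν + 1) / 2) / (√π * Gamma (ν / 2)) *
      ∫ x in Ioi (t / √ν), (1 + x ^ 2) ^ (-((ν + 1) / 2)) := by
  have hsqrt : 0 < √ν := sqrt_pos.2 hν
  rw [setIntegral_congr_fun measurableSet_Ioi fun u _ ↦ tPDF_eq_comp_inv_sqrt_mul hν u,
    integral_const_mul,
    integral_comp_mul_left_Ioi (fun x ↦ (1 + x ^ 2) ^ (-((ν + 1) / 2))) t (inv_pos.2 hsqrt),
    inv_inv, smul_eq_mul, inv_mul_eq_div, sqrt_mul hν.le]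
  field_simp

theorem integral_Ioi_zero_tPDF {ν : ℝ} (hν : 0 < ν) : ∫ u in Ioi 0, tPDF ν u = 1 / 2 := by
  have hΓ := Gamma_pos_of_pos (by linarith : 0 < (ν + 1) / 2)
  have hΓ' := Gamma_pos_of_pos (by linarith : 0 < ν / 2)
  rw [integral_Ioi_tPDF hν, zero_div, integral_Ioi_zero_one_add_sq_rpow_neg (by linarith),
    show (ν + 1) / 2 - 1 / 2 = ν / 2 by ring]
  field_simp

theorem tCDF_eq_integral_Ioi_neg (ν t : ℝ) : tCDF ν t = ∫ u in Ioi (-t), tPDF ν u := by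
  simp only [tCDF_eq_integral_tPDF, ← integral_comp_neg_Iic, tPDF_neg]

theorem integral_tPDF {ν : ℝ} (hν : 0 < ν) : ∫ u, tPDF ν u = 1 := by
  have h := intervalIntegral.integral_Iic_add_Ioi (b := 0) (integrable_tPDF hν).integrableOn
    (integrable_tPDF hν).integrableOn
  rw [← tCDF_eq_integral_tPDF, tCDF_eq_integral_Ioi_neg, neg_zero,
    integral_Ioi_zero_tPDF hν] at h
  linarith

theorem one_sub_tCDF {ν : ℝ} (hν : 0 < ν) (t : ℝ) :
    1 - tCDF ν t = ∫ u in Ioi t, tPDF ν u := by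
  rw [← integral_tPDF hν, tCDF_eq_integral_tPDF, ← intervalIntegral.integral_Iic_add_Ioi
    (integrable_tPDF hν).integrableOn (integrable_tPDF hν).integrableOn, add_sub_cancel_left]

theorem half_le_one_sub_tCDF {ν t : ℝ} (hν : 0 < ν) (ht : t ≤ 0) :
    1 / 2 ≤ 1 - tCDF ν t := by
  rw [one_sub_tCDF hν, ← integral_Ioi_zero_tPDF hν]
  exact setIntegral_mono_set (integrable_tPDF hν).integrableOn
    (Eventually.of_forall (tPDF_nonneg hν)) (Ioi_subset_Ioi ht).eventuallyLE

theorem le_one_sub_tCDF_of_nonneg {ν t : ℝ} (hν : 0 < ν) (ht : 0 ≤ t) :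
    Gamma ((ν + 1) / 2) / (√π * Gamma (ν / 2)) * ((1 + t ^ 2 / ν) ^ (-(ν / 2)) / ν)
      ≤ 1 - tCDF ν t := by
  have hΓ := Gamma_pos_of_pos (by linarith : 0 < (ν + 1) / 2)
  have hΓ' := Gamma_pos_of_pos (by linarith : 0 < ν / 2)
  have h := one_add_sq_rpow_div_le_integral_Ioi (s := (ν + 1) / 2) (t := t / √ν)
    (by linarith) (by positivity)
  rw [div_pow, sq_sqrt hν.le, show (ν + 1) / 2 - 1 / 2 = ν / 2 by ring,
    show 2 * ((ν + 1) / 2) - 1 = ν by ring] at h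
  rw [one_sub_tCDF hν, integral_Ioi_tPDF hν]
  gcongr

theorem sub_one_div_two_le_rpow {ν : ℝ} (hν : 2 ≤ ν) :
    (ν - 1) / 2 ≤ ν ^ (ν / 2 - 1) := by
  have hν0 : 0 < ν := by linarith
  have hexp := add_one_le_exp (log ν * (ν / 2 - 1))
  have hlog : (1 - ν⁻¹) * (ν / 2 - 1) ≤ log ν * (ν / 2 - 1) :=
    mul_le_mul_of_nonneg_right (one_sub_inv_le_log_of_pos hν0) (by linarith)
  have hexpand : (1 - ν⁻¹) * (ν / 2 - 1) = ν / 2 - 3 / 2 + ν⁻¹ := by field_simp; ring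
  have hinv : 0 < ν⁻¹ := inv_pos.2 hν0
  rw [rpow_def_of_pos hν0]
  linarith

noncomputable def tTailConst (ν : ℝ) : ℝ :=
  Gamma ((ν + 1) / 2) * (ν - 1) / (2 * √π * Gamma (ν / 2))

theorem tTailConst_pos {ν : ℝ} (hν : 1 < ν) : 0 < tTailConst ν := by
  have := Gamma_pos_of_pos (by linarith : 0 < (ν + 1) / 2)
  have := Gamma_pos_of_pos (by linarith : 0 < ν / 2)
  have := sub_pos.2 hν
  unfold tTailConst
  positivity

theorem tTailConst_mul_le_one_sub_tCDF {ν t : ℝ} (hν : 2 < ν) (ht : 0 ≤ t) :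
    tTailConst ν * (t ^ 2 + ν) ^ (-(ν / 2)) ≤ 1 - tCDF ν t := by
  have hν0 : 0 < ν := by linarith
  have hΓ := Gamma_pos_of_pos (by linarith : 0 < (ν + 1) / 2)
  have hΓ' := Gamma_pos_of_pos (by linarith : 0 < ν / 2)
  have hscale :
      (1 + t ^ 2 / ν) ^ (-(ν / 2)) / ν = ν ^ (ν / 2 - 1) * (t ^ 2 + ν) ^ (-(ν / 2)) := by
    rw [show 1 + t ^ 2 / ν = ν⁻¹ * (t ^ 2 + ν) by field_simp; ring,
      mul_rpow (by positivity) (by positivity), inv_rpow hν0.le, ← rpow_neg hν0.le, neg_neg,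
      rpow_sub_one hν0.ne']
    ring
  set r := Gamma ((ν + 1) / 2) / (√π * Gamma (ν / 2))
  calc tTailConst ν * (t ^ 2 + ν) ^ (-(ν / 2))
      = r * ((ν - 1) / 2 * (t ^ 2 + ν) ^ (-(ν / 2))) := by
        unfold tTailConst; ring
    _ ≤ r * (ν ^ (ν / 2 - 1) * (t ^ 2 + ν) ^ (-(ν / 2))) := by
        gcongr
        exact sub_one_div_two_le_rpow hν.le
    _ ≤ 1 - tCDF ν t := hscale ▸ le_one_sub_tCDF_of_nonneg hν0 ht

theorem one_div_one_sub_tCDF_le {ν : ℝ} (hν : 2 < ν) (t : ℝ) :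
    1 / (1 - tCDF ν t) ≤ 2 + (t ^ 2 + ν) ^ (ν / 2) / tTailConst ν := by
  have hν0 : 0 < ν := by linarith
  have hκ := tTailConst_pos (by linarith : 1 < ν)
  have hbase : 0 < t ^ 2 + ν := by positivity
  have hbound : 0 < (t ^ 2 + ν) ^ (ν / 2) / tTailConst ν := by positivity
  rcases le_total t 0 with ht | ht
  · have h := one_div_le_one_div_of_le one_half_pos (half_le_one_sub_tCDF hν0 ht)
    rw [one_div_one_div] at h
    linarith
  · have h := one_div_le_one_div_of_le (by positivity) (tTailConst_mul_le_one_sub_tCDF hν ht)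
    rw [rpow_neg hbase.le, ← div_eq_mul_inv, one_div_div] at h
    linarith

/-- For every real `t`, both `1/(1 - F_ν(t))` and `1/F_ν(t)` are bounded by
`2 + (t² + ν)^{ν/2} / κ` where `κ = Γ((ν+1)/2)(ν−1)/(2√π Γ(ν/2))`. -/
theorem t_cdf_reciprocal_bounds (ν : ℝ) (hν : 2 < ν) (t : ℝ) :
    1 / (1 - tCDF ν t) ≤
      2 + (t ^ 2 + ν) ^ (ν / 2) /
        (Real.Gamma ((ν + 1) / 2) * (ν - 1) / (2 * Real.sqrt Real.pi * Real.Gamma (ν / 2))) ∧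
    1 / tCDF ν t ≤
      2 + (t ^ 2 + ν) ^ (ν / 2) /
        (Real.Gamma ((ν + 1) / 2) * (ν - 1) / (2 * Real.sqrt Real.pi * Real.Gamma (ν / 2))) := by
  have hν0 : 0 < ν := by linarith
  have hreflect : tCDF ν t = 1 - tCDF ν (-t) := by
    rw [one_sub_tCDF hν0, tCDF_eq_integral_Ioi_neg]
  have hleft := one_div_one_sub_tCDF_le hν (-t)
  rw [neg_sq, ← hreflect] at hleft
  exact ⟨one_div_one_sub_tCDF_le hν t, hleft⟩
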